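/- arXiv:2210.05933 — 2 statements merged into one kernel-verified Lean document; each statement's English description precedes it below -/
import Mathlib

section
/- Let 1 → N → G → Q → 1 be a short exact sequence of groups. Then there is an exact sequence (Stallings) H₂(G;ℤ) → H₂(Q;ℤ) → N/[N,G] → H₁(G;ℤ) → H₁(Q;ℤ) → 0, natural in morphisms of short exact sequences. -/
noncomputable section

/-- The canonical free presentation `FreeGroup G → G` of a group `G`. -/
def freePres (G : Type*) [Group G] : FreeGroup G →* G := FreeGroup.lift id

theorem freePres_naturality {G₁ G₂ : Type*} [Group G₁] [Group G₂] (f : G₁ →* G₂) :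
    (freePres G₂).comp (FreeGroup.map f) = f.comp (freePres G₁) := by
  ext x
  simp [freePres]

theorem freeMap_ker_le {G₁ G₂ : Type*} [Group G₁] [Group G₂] (f : G₁ →* G₂) :
    (freePres G₁).ker.map (FreeGroup.map f) ≤ (freePres G₂).ker := by
  intro y hy
  obtain ⟨z, hz, rfl⟩ := Subgroup.mem_map.mp hy
  rw [MonoidHom.mem_ker, ← MonoidHom.comp_apply, freePres_naturality,
    MonoidHom.comp_apply, MonoidHom.mem_ker.mp hz, map_one]

/-- Hopf's formula model for the second integral group homology `H₂(G;ℤ)`: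
for the canonical free presentation `1 → R → F → G → 1` with `F = FreeGroup G`,
`H₂(G;ℤ) ≅ (R ⊓ [F,F]) / [F,R]`. -/
abbrev SchurH2 (G : Type*) [Group G] : Type _ :=
  ↥((freePres G).ker ⊓ commutator (FreeGroup G)) ⧸
    ((⁅(freePres G).ker, (⊤ : Subgroup (FreeGroup G))⁆).subgroupOf
      ((freePres G).ker ⊓ commutator (FreeGroup G)))

theorem freeMap_mem {G₁ G₂ : Type*} [Group G₁] [Group G₂] (f : G₁ →* G₂)
    (x : ↥((freePres G₁).ker ⊓ commutator (FreeGroup G₁))) :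
    FreeGroup.map f x.1 ∈ (freePres G₂).ker ⊓ commutator (FreeGroup G₂) := by
  have hk := (Subgroup.mem_inf.mp x.2).1
  have hc := (Subgroup.mem_inf.mp x.2).2
  refine Subgroup.mem_inf.mpr ⟨?_, ?_⟩
  · exact freeMap_ker_le f (Subgroup.mem_map.mpr ⟨x.1, hk, rfl⟩)
  · have hle : (commutator (FreeGroup G₁)).map (FreeGroup.map f) ≤
        commutator (FreeGroup G₂) := by
      rw [commutator_def, Subgroup.map_commutator, commutator_def]
      exact Subgroup.commutator_mono le_top le_top
    exact hle (Subgroup.mem_map.mpr ⟨x.1, hc, rfl⟩)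

/-- The map induced by a group homomorphism on Hopf-formula `H₂`. -/
def SchurH2map {G₁ G₂ : Type*} [Group G₁] [Group G₂] (f : G₁ →* G₂) :
    SchurH2 G₁ →* SchurH2 G₂ :=
  QuotientGroup.map _ _
    (((FreeGroup.map f).domRestrict ((freePres G₁).ker ⊓ commutator (FreeGroup G₁))).codRestrict
      ((freePres G₂).ker ⊓ commutator (FreeGroup G₂)) (freeMap_mem f))
    (by
      intro x hx
      simp only [Subgroup.mem_subgroupOf, Subgroup.mem_comap] at hx ⊢
      have hle : (⁅(freePres G₁).ker, (⊤ : Subgroup (FreeGroup G₁))⁆).map (FreeGroup.map f) ≤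
          ⁅(freePres G₂).ker, (⊤ : Subgroup (FreeGroup G₂))⁆ := by
        rw [Subgroup.map_commutator]
        exact Subgroup.commutator_mono (freeMap_ker_le f) le_top
      exact hle (Subgroup.mem_map.mpr ⟨x.1, hx, rfl⟩))

/-- The coinvariants `N/[N,G]` of a normal subgroup `N ⊴ G`. -/
abbrev Coinv (G : Type*) [Group G] (N : Subgroup G) [N.Normal] : Type _ :=
  N ⧸ ((⁅N, (⊤ : Subgroup G)⁆).subgroupOf N)

/-- The canonical map `N/[N,G] → H₁(G;ℤ) = Gᵃᵇ`. -/
def coinvToAb (G : Type*) [Group G] (N : Subgroup G) [N.Normal] :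
    Coinv G N →* Abelianization G :=
  QuotientGroup.lift _ ((Abelianization.of (G := G)).comp N.subtype)
    (by
      intro x hx
      rw [Subgroup.mem_subgroupOf] at hx
      have hmem : (x : G) ∈ commutator G := Subgroup.commutator_mono le_top le_top hx
      exact (QuotientGroup.eq_one_iff _).mpr hmem)

/-- The map on coinvariants induced by a morphism of pairs `(G, N) → (G', N')`. -/
def coinvMap {G G' : Type*} [Group G] [Group G'] (f : G →* G') (N : Subgroup G)
    (N' : Subgroup G') [N.Normal] [N'.Normal] (hf : ∀ n ∈ N, f n ∈ N') :
    Coinv G N →* Coinv G' N' :=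
  QuotientGroup.map _ _ ((f.domRestrict N).codRestrict N' (fun x => hf x.1 x.2))
    (by
      intro x hx
      simp only [Subgroup.mem_subgroupOf, Subgroup.mem_comap] at hx ⊢
      have hle : (⁅N, (⊤ : Subgroup G)⁆).map f ≤ ⁅N', (⊤ : Subgroup G')⁆ := by
        rw [Subgroup.map_commutator]
        refine Subgroup.commutator_mono ?_ le_top
        intro y hy
        obtain ⟨z, hz, rfl⟩ := Subgroup.mem_map.mp hy
        exact hf z hz
      exact hle (Subgroup.mem_map.mpr ⟨x.1, hx, rfl⟩))

/-!
Write `Q = G ⧸ N`, `F = FreeGroup Q`, `R = ker (F → Q)`, and lift `F → Q` to `s : F → G` through a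
set-theoretic section of `G → Q`. The connecting map sends a Hopf cycle `x ∈ R ∩ [F, F]` to
`s x ∈ N`. Everything rests on one observation: `N` is central in `G ⧸ [N, G]`, so two
homomorphisms into `G` that agree modulo `N` agree modulo `[N, G]` on commutators. This makes the
connecting map independent of choices modulo `[N, G]` (naturality, and vanishing on the image of
`H₂(G)`); and since `G` is generated by `s F` together with `N`, the commutator subgroup of
`G ⧸ [N, G]` is the image of `[F, F]` (exactness at `N/[N, G]`).
-/

section CentralCommutators

open scoped commutatorElement
open Subgroup

variable {G H : Type*} [Group G] [Group H]

theorem Subgroup.apply_mem_commutator_of_le_comap (f : G →* H) {H₁ H₂ : Subgroup G}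
    {K₁ K₂ : Subgroup H} (h₁ : H₁ ≤ K₁.comap f) (h₂ : H₂ ≤ K₂.comap f) {x : G}
    (hx : x ∈ ⁅H₁, H₂⁆) : f x ∈ ⁅K₁, K₂⁆ :=
  (commutator_le (H₃ := ⁅K₁, K₂⁆.comap f)).mpr (fun a ha b hb => by
    simpa only [mem_comap, map_commutatorElement] using
      commutator_mem_commutator (mem_comap.mp (h₁ ha)) (mem_comap.mp (h₂ hb))) hx

theorem commutatorElement_mul_mem_center (a b : G) {c d : G} (hc : c ∈ center G)
    (hd : d ∈ center G) : ⁅a * c, b * d⁆ = ⁅a, b⁆ := by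
  have hcx : ∀ x : G, ⁅c, x⁆ = 1 := fun x =>
    commutatorElement_eq_one_iff_commute.mpr (mem_center_iff.mp hc x).symm
  have hxd : ∀ x : G, ⁅x, d⁆ = 1 := fun x =>
    commutatorElement_eq_one_iff_commute.mpr (mem_center_iff.mp hd x)
  rw [commutatorElement_mul_left_eq_conj_mul, hcx, commutatorElement_mul_right_eq_mul_conj, hxd]
  group

theorem MonoidHom.eqOn_commutator_of_inv_mul_mem_center (φ ψ : G →* H)
    (h : ∀ x, (φ x)⁻¹ * ψ x ∈ center H) {w : G} (hw : w ∈ commutator G) : φ w = ψ w := by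
  refine (commutator_le (H₃ := MonoidHom.eqLocus φ ψ)).mpr (fun u _ v _ => ?_) hw
  have hψ : ∀ x, ψ x = φ x * ((φ x)⁻¹ * ψ x) := fun x => (mul_inv_cancel_left _ _).symm
  change φ ⁅u, v⁆ = ψ ⁅u, v⁆
  rw [map_commutatorElement, map_commutatorElement, hψ u, hψ v,
    commutatorElement_mul_mem_center _ _ (h u) (h v)]

theorem MonoidHom.commutator_le_map_commutator_of_forall_exists (φ : H →* G)
    (h : ∀ g, ∃ x, (φ x)⁻¹ * g ∈ center G) : commutator G ≤ (commutator H).map φ := by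
  rw [map_commutator_eq]
  refine commutator_le.mpr (fun g₁ _ g₂ _ => ?_)
  obtain ⟨x₁, hx₁⟩ := h g₁
  obtain ⟨x₂, hx₂⟩ := h g₂
  rw [← mul_inv_cancel_left (φ x₁) g₁, ← mul_inv_cancel_left (φ x₂) g₂,
    commutatorElement_mul_mem_center _ _ hx₁ hx₂]
  exact commutator_mem_commutator ⟨x₁, rfl⟩ ⟨x₂, rfl⟩

theorem QuotientGroup.map_mk'_commutator_top_le_center (N : Subgroup G) [N.Normal] :
    N.map (QuotientGroup.mk' ⁅N, (⊤ : Subgroup G)⁆) ≤ center (G ⧸ ⁅N, (⊤ : Subgroup G)⁆) := by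
  rw [← commutator_top_right_eq_bot_iff_le_center,
    ← map_top_of_surjective _ (QuotientGroup.mk'_surjective _), ← map_commutator,
    Subgroup.map_eq_bot_iff, QuotientGroup.ker_mk']

theorem QuotientGroup.inv_mul_mem_commutator_top_of_mk'_comp_eq (N : Subgroup G) [N.Normal]
    {φ ψ : H →* G} (h : (QuotientGroup.mk' N).comp φ = (QuotientGroup.mk' N).comp ψ) {w : H}
    (hw : w ∈ commutator H) : (φ w)⁻¹ * ψ w ∈ ⁅N, (⊤ : Subgroup G)⁆ := by
  have hN : ∀ x, (φ x)⁻¹ * ψ x ∈ N := fun x =>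
    QuotientGroup.eq.mp (DFunLike.congr_fun h x)
  have := ((QuotientGroup.mk' ⁅N, (⊤ : Subgroup G)⁆).comp φ).eqOn_commutator_of_inv_mul_mem_center
    ((QuotientGroup.mk' ⁅N, (⊤ : Subgroup G)⁆).comp ψ)
    (fun x => by
      simpa only [MonoidHom.comp_apply, map_mul, map_inv] using
        map_mk'_commutator_top_le_center N (mem_map_of_mem _ (hN x))) hw
  exact QuotientGroup.eq.mp this

end CentralCommutators

section ConnectingMap

open Subgroup

variable {G : Type*} [Group G] (N : Subgroup G) [N.Normal]

def presLift : FreeGroup (G ⧸ N) →* G := FreeGroup.lift Quotient.out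

theorem mk'_comp_presLift : (QuotientGroup.mk' N).comp (presLift N) = freePres (G ⧸ N) := by
  ext q
  simp [presLift, freePres]

theorem presLift_mem_iff_mem_ker {x : FreeGroup (G ⧸ N)} :
    presLift N x ∈ N ↔ x ∈ (freePres (G ⧸ N)).ker := by
  rw [← QuotientGroup.eq_one_iff, ← QuotientGroup.mk'_apply, ← MonoidHom.comp_apply,
    mk'_comp_presLift, MonoidHom.mem_ker]

theorem presLift_mem_commutator_top {x : FreeGroup (G ⧸ N)}
    (hx : x ∈ ⁅(freePres (G ⧸ N)).ker, (⊤ : Subgroup (FreeGroup (G ⧸ N)))⁆) :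
    presLift N x ∈ ⁅N, (⊤ : Subgroup G)⁆ :=
  apply_mem_commutator_of_le_comap _ (fun _ => (presLift_mem_iff_mem_ker N).mpr) le_top hx

theorem presLift_map_inv_mul_freePres_mem {w : FreeGroup G}
    (hw : w ∈ commutator (FreeGroup G)) :
    (presLift N (FreeGroup.map (QuotientGroup.mk' N) w))⁻¹ * freePres G w ∈
      ⁅N, (⊤ : Subgroup G)⁆ := by
  refine QuotientGroup.inv_mul_mem_commutator_top_of_mk'_comp_eq N (φ := (presLift N).comp _)
    ?_ hw
  rw [← MonoidHom.comp_assoc, mk'_comp_presLift, freePres_naturality]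

def stallingsConnecting : SchurH2 (G ⧸ N) →* Coinv G N :=
  QuotientGroup.map _ _
    (((presLift N).domRestrict _).codRestrict N
      (fun x => (presLift_mem_iff_mem_ker N).mpr (mem_inf.mp x.2).1))
    (fun _ hx => presLift_mem_commutator_top N (mem_subgroupOf.mp hx))

theorem stallingsConnecting_mk
    (x : ↥((freePres (G ⧸ N)).ker ⊓ commutator (FreeGroup (G ⧸ N)))) :
    stallingsConnecting N x =
      (⟨presLift N x, (presLift_mem_iff_mem_ker N).mpr (mem_inf.mp x.2).1⟩ : N) :=
  rfl

theorem stallingsConnecting_mk_eq_one_iff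
    (x : ↥((freePres (G ⧸ N)).ker ⊓ commutator (FreeGroup (G ⧸ N)))) :
    stallingsConnecting N x = 1 ↔ presLift N x ∈ ⁅N, (⊤ : Subgroup G)⁆ := by
  rw [stallingsConnecting_mk, QuotientGroup.eq_one_iff, mem_subgroupOf]

end ConnectingMap

section Exactness

open Subgroup

variable {G : Type*} [Group G] (N : Subgroup G) [N.Normal]

theorem stallingsConnecting_comp_schurH2map :
    (stallingsConnecting N).comp (SchurH2map (QuotientGroup.mk' N)) = 1 := by
  refine QuotientGroup.monoidHom_ext _ (MonoidHom.ext fun z => ?_)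
  have h := presLift_map_inv_mul_freePres_mem N (mem_inf.mp z.2).2
  rw [MonoidHom.mem_ker.mp (mem_inf.mp z.2).1, mul_one] at h
  exact (stallingsConnecting_mk_eq_one_iff N ⟨_, freeMap_mem _ z⟩).mpr (by simpa using inv_mem h)

theorem exists_mem_schurH2_map_inv_mul_mem {x : FreeGroup (G ⧸ N)}
    (hx : x ∈ commutator (FreeGroup (G ⧸ N))) (h : presLift N x ∈ ⁅N, (⊤ : Subgroup G)⁆) :
    ∃ z ∈ (freePres G).ker ⊓ commutator (FreeGroup G),
      (FreeGroup.map (QuotientGroup.mk' N) z)⁻¹ * x ∈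
        ⁅(freePres (G ⧸ N)).ker, (⊤ : Subgroup (FreeGroup (G ⧸ N)))⁆ := by
  -- lift `x` to `w ∈ [F_G, F_G]`, then correct `w` by a preimage in `⁅N.comap (freePres G), F_G⁆`
  -- of `freePres G w ∈ ⁅N, G⁆`
  set m : FreeGroup G →* FreeGroup (G ⧸ N) := FreeGroup.map (QuotientGroup.mk' N)
  obtain ⟨w, hw, rfl⟩ : x ∈ (commutator (FreeGroup G)).map m := by
    rwa [map_commutator_eq, m.range_eq_top_of_surjective
      (FreeGroup.map_surjective (QuotientGroup.mk'_surjective N))]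
  have hew : freePres G w ∈ ⁅N, (⊤ : Subgroup G)⁆ := by
    have := mul_mem h (presLift_map_inv_mul_freePres_mem N hw)
    rwa [mul_inv_cancel_left] at this
  obtain ⟨v, hv, hvw⟩ : freePres G w ∈
      (⁅N.comap (freePres G), ⊤⁆ : Subgroup (FreeGroup G)).map (freePres G) := by
    have he : Function.Surjective (freePres G) := fun g => ⟨FreeGroup.of g, by simp [freePres]⟩
    rwa [map_commutator, map_comap_eq_self_of_surjective he, map_top_of_surjective _ he]
  have hmv : m v ∈ ⁅(freePres (G ⧸ N)).ker, (⊤ : Subgroup (FreeGroup (G ⧸ N)))⁆ := by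
    refine apply_mem_commutator_of_le_comap m (fun t ht => ?_) le_top hv
    rw [mem_comap, MonoidHom.mem_ker, ← MonoidHom.comp_apply, freePres_naturality,
      MonoidHom.comp_apply, QuotientGroup.mk'_apply, QuotientGroup.eq_one_iff]
    exact ht
  refine ⟨w * v⁻¹, mem_inf.mpr ⟨?_, mul_mem hw (inv_mem (commutator_mono le_top le_top hv))⟩, ?_⟩
  · rw [MonoidHom.mem_ker, map_mul, map_inv, hvw, mul_inv_cancel]
  · simpa [mul_assoc] using hmv

theorem stallingsConnecting_eq_one_iff (y : SchurH2 (G ⧸ N)) :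
    stallingsConnecting N y = 1 ↔ y ∈ Set.range (SchurH2map (QuotientGroup.mk' N)) := by
  constructor
  · induction y using QuotientGroup.induction_on with | _ x => ?_
    intro h
    obtain ⟨z, hz, hzx⟩ := exists_mem_schurH2_map_inv_mul_mem N (mem_inf.mp x.2).2
      ((stallingsConnecting_mk_eq_one_iff N x).mp h)
    exact ⟨QuotientGroup.mk (⟨z, hz⟩ : ↥((freePres G).ker ⊓ commutator (FreeGroup G))),
      QuotientGroup.eq.mpr (mem_subgroupOf.mpr hzx)⟩
  · rintro ⟨y, rfl⟩
    exact DFunLike.congr_fun (stallingsConnecting_comp_schurH2map N) y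

theorem coinvToAb_comp_stallingsConnecting :
    (coinvToAb G N).comp (stallingsConnecting N) = 1 :=
  QuotientGroup.monoidHom_ext _ (MonoidHom.ext fun x => (QuotientGroup.eq_one_iff _).mpr
    (apply_mem_commutator_of_le_comap (presLift N) le_top le_top (mem_inf.mp x.2).2))

theorem exists_presLift_inv_mul_mem {n : G} (hn : n ∈ N) (hc : n ∈ commutator G) :
    ∃ x ∈ (freePres (G ⧸ N)).ker ⊓ commutator (FreeGroup (G ⧸ N)),
      (presLift N x)⁻¹ * n ∈ ⁅N, (⊤ : Subgroup G)⁆ := by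
  set ρ := QuotientGroup.mk' ⁅N, (⊤ : Subgroup G)⁆
  -- `G` is generated by the image of `presLift N` together with `N`, which is central mod `⁅N, G⁆`
  have hgen : commutator (G ⧸ ⁅N, (⊤ : Subgroup G)⁆) ≤
      (commutator (FreeGroup (G ⧸ N))).map (ρ.comp (presLift N)) := by
    refine MonoidHom.commutator_le_map_commutator_of_forall_exists _ fun g => ?_
    obtain ⟨g, rfl⟩ := QuotientGroup.mk'_surjective _ g
    refine ⟨FreeGroup.of g, ?_⟩
    have hg : (Quotient.out (g : G ⧸ N))⁻¹ * g ∈ N :=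
      QuotientGroup.eq.mp (QuotientGroup.out_eq' (g : G ⧸ N))
    simpa [presLift, ρ] using
      QuotientGroup.map_mk'_commutator_top_le_center N (mem_map_of_mem ρ hg)
  obtain ⟨x, hx, hxn⟩ :=
    hgen (apply_mem_commutator_of_le_comap ρ le_top le_top (K₁ := ⊤) (K₂ := ⊤) hc)
  have hdiff : (presLift N x)⁻¹ * n ∈ ⁅N, (⊤ : Subgroup G)⁆ := QuotientGroup.eq.mp hxn
  have hxN : presLift N x ∈ N :=
    inv_mem_iff.mp ((mul_mem_cancel_right hn).mp (commutator_le_left N ⊤ hdiff))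
  exact ⟨x, mem_inf.mpr ⟨(presLift_mem_iff_mem_ker N).mp hxN, hx⟩, hdiff⟩

theorem coinvToAb_eq_one_iff (z : Coinv G N) :
    coinvToAb G N z = 1 ↔ z ∈ Set.range (stallingsConnecting N) := by
  constructor
  · induction z using QuotientGroup.induction_on with | _ n => ?_
    intro h
    obtain ⟨x, hx, hxn⟩ := exists_presLift_inv_mul_mem N n.2 ((QuotientGroup.eq_one_iff _).mp h)
    exact ⟨QuotientGroup.mk ⟨x, hx⟩, QuotientGroup.eq.mpr (mem_subgroupOf.mpr hxn)⟩
  · rintro ⟨y, rfl⟩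
    exact DFunLike.congr_fun (coinvToAb_comp_stallingsConnecting N) y

theorem abelianizationMap_mk'_eq_one_iff (w : Abelianization G) :
    Abelianization.map (QuotientGroup.mk' N) w = 1 ↔ w ∈ Set.range (coinvToAb G N) := by
  induction w using QuotientGroup.induction_on with | _ g => ?_
  constructor
  · intro h
    obtain ⟨c, hc, hcg⟩ : QuotientGroup.mk' N g ∈ (commutator G).map (QuotientGroup.mk' N) := by
      rw [map_commutator_eq,
        MonoidHom.range_eq_top_of_surjective _ (QuotientGroup.mk'_surjective N)]
      exact (QuotientGroup.eq_one_iff _).mp h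
    refine ⟨QuotientGroup.mk ⟨c⁻¹ * g, QuotientGroup.eq.mp hcg⟩, ?_⟩
    change Abelianization.of (c⁻¹ * g) = Abelianization.of g
    have hc1 : Abelianization.of c = 1 := (QuotientGroup.eq_one_iff c).mpr hc
    rw [map_mul, map_inv, hc1, inv_one, one_mul]
  · rintro ⟨z, hz⟩
    rw [← hz]
    induction z using QuotientGroup.induction_on with | _ n => ?_
    change Abelianization.of (QuotientGroup.mk' N n) = 1
    rw [QuotientGroup.mk'_apply, (QuotientGroup.eq_one_iff _).mpr n.2, map_one]

end Exactness

theorem Abelianization.map_surjective {G H : Type*} [Group G] [Group H] {f : G →* H}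
    (hf : Function.Surjective f) : Function.Surjective (Abelianization.map f) := by
  intro y
  induction y using QuotientGroup.induction_on with | _ h => ?_
  obtain ⟨g, rfl⟩ := hf h
  exact ⟨Abelianization.of g, Abelianization.map_of f g⟩

section Naturality

open Subgroup

theorem stallingsConnecting_naturality {G G' : Type*} [Group G] [Group G'] (N : Subgroup G)
    (N' : Subgroup G') [N.Normal] [N'.Normal] (f : G →* G') (hf : ∀ n ∈ N, f n ∈ N') :
    (stallingsConnecting N').comp (SchurH2map (QuotientGroup.map N N' f hf)) =
      (coinvMap f N N' hf).comp (stallingsConnecting N) := by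
  refine QuotientGroup.monoidHom_ext _ (MonoidHom.ext fun x => QuotientGroup.eq.mpr ?_)
  have hcomp : (QuotientGroup.mk' N').comp
      ((presLift N').comp (FreeGroup.map (QuotientGroup.map N N' f hf))) =
        (QuotientGroup.mk' N').comp (f.comp (presLift N)) := by
    rw [← MonoidHom.comp_assoc, mk'_comp_presLift, freePres_naturality, ← mk'_comp_presLift N,
      ← MonoidHom.comp_assoc, ← MonoidHom.comp_assoc]
    rfl
  exact mem_subgroupOf.mpr
    (QuotientGroup.inv_mul_mem_commutator_top_of_mk'_comp_eq N' hcomp (mem_inf.mp x.2).2)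

end Naturality

universe u

/-- Stallings' five-term exact sequence: for every short exact sequence
`1 → N → G → Q → 1` of groups there is an exact sequence
`H₂(G;ℤ) → H₂(Q;ℤ) → N/[N,G] → H₁(G;ℤ) → H₁(Q;ℤ) → 0`,
natural in morphisms of short exact sequences.  Here `H₂` is the Hopf-formula model
`SchurH2`, `H₁` is the abelianization, the maps `H₂(G) → H₂(Q)` and `H₁(G) → H₁(Q)` are
induced by `G → Q = G/N`, the map `N/[N,G] → H₁(G)` is `coinvToAb`, and the connecting
map `H₂(Q) → N/[N,G]` is asserted to exist, naturally in the pair `(G, N)`. -/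
theorem stmt16 :
    ∃ β : ∀ (G : Type u) [Group G] (N : Subgroup G) [N.Normal],
        SchurH2 (G ⧸ N) →* Coinv G N,
      (∀ (G : Type u) [Group G] (N : Subgroup G) [N.Normal],
        -- exactness at `H₂(Q)`
        (∀ y : SchurH2 (G ⧸ N),
          β G N y = 1 ↔ y ∈ Set.range (SchurH2map (QuotientGroup.mk' N))) ∧
        -- exactness at `N/[N,G]`
        (∀ z : Coinv G N, coinvToAb G N z = 1 ↔ z ∈ Set.range (β G N)) ∧
        -- exactness at `H₁(G)`
        (∀ w : Abelianization G,
          Abelianization.map (QuotientGroup.mk' N) w = 1 ↔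
            w ∈ Set.range (coinvToAb G N)) ∧
        -- exactness at `H₁(Q)`: surjectivity
        Function.Surjective (Abelianization.map (QuotientGroup.mk' N))) ∧
      -- naturality in morphisms of short exact sequences
      (∀ (G G' : Type u) [Group G] [Group G'] (N : Subgroup G) (N' : Subgroup G')
          [N.Normal] [N'.Normal] (f : G →* G') (hf : ∀ n ∈ N, f n ∈ N'),
        (β G' N').comp
            (SchurH2map (QuotientGroup.map N N' f (fun n hn => hf n hn))) =
          (coinvMap f N N' hf).comp (β G N)) :=
  ⟨fun _ _ N _ => stallingsConnecting N,
    fun _ _ N _ => ⟨stallingsConnecting_eq_one_iff N, coinvToAb_eq_one_iff N,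
      abelianizationMap_mk'_eq_one_iff N,
      Abelianization.map_surjective (QuotientGroup.mk'_surjective N)⟩,
    fun _ _ _ _ N N' _ _ f hf => stallingsConnecting_naturality N N' f hf⟩

end
end

section
/- Stallings' theorem: let f : G₁ → G₂ be a group homomorphism inducing an isomorphism on H₁(−;ℤ) and an epimorphism on H₂(−;ℤ). Then for all i ≥ 1, f induces an isomorphism G₁/Γ^{i+1}G₁ ≅ G₂/Γ^{i+1}G₂. In particular, if G₁ and G₂ are nilpotent, f is an isomorphism. -/
noncomputable section

/-- The map induced by `f : G₁ →* G₂` on the quotients by the lower central series.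
(Mathlib's `lowerCentralSeries G r` is the paper's `Γ^{r+1}G`.) -/
def lcsQuotMap {G₁ G₂ : Type*} [Group G₁] [Group G₂] (f : G₁ →* G₂) (r : ℕ) :
    G₁ ⧸ (⊤ : Subgroup G₁).lowerCentralSeries r →* G₂ ⧸ (⊤ : Subgroup G₂).lowerCentralSeries r :=
  QuotientGroup.map _ _ f
    (Subgroup.map_le_iff_le_comap.mp (Subgroup.lowerCentralSeries.map f r))

/-!
Stallings' argument. For a normal subgroup `N` of `G`, Hopf's formula gives an exact sequence
`H₂(G) → H₂(G/N) → N/[N,G] → H₁(G) → H₁(G/N)`, natural in `(G, N)`, whose connecting map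
evaluates a relator of `G/N` on chosen coset representatives. Its exactness and naturality rest on
one observation: two homomorphisms that agree modulo `N` agree modulo `[N,G]` on commutators,
because `N/[N,G]` is central in `G/[N,G]`. Take for `N` a term of the lower central series, so
that `[N,G]` is the next one. If `f` is bijective on `G/N`, it is bijective on `H₁` and `H₂` of
`G/N`, so the five lemma makes it bijective on `N/[N,G]`, hence on `G/[N,G]`. A nilpotent group
is its own quotient by a late enough term of the lower central series.
-/
open scoped commutatorElement

section Commutators

open QuotientGroup Subgroup

variable {F G H : Type*} [Group F] [Group G] [Group H]

theorem commutator_le_comap_commutator (f : G →* H) : commutator G ≤ (commutator H).comap f := by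
  rw [← map_le_iff_le_comap, commutator_def, commutator_def, map_commutator]
  exact commutator_mono le_top le_top

theorem map_commutator_of_surjective {f : G →* H} (hf : Function.Surjective f) :
    (commutator G).map f = commutator H := by
  rw [commutator_def, commutator_def, map_commutator, map_top_of_surjective _ hf]

theorem QuotientGroup.mk_eq_mk_subgroupOf_iff {K L : Subgroup G} {a b : K} :
    (a : K ⧸ L.subgroupOf K) = b ↔ ((a : G) : G ⧸ L) = (b : G) := by
  rw [QuotientGroup.eq, QuotientGroup.eq, mem_subgroupOf, coe_mul, coe_inv]

theorem QuotientGroup.mk_eq_one_subgroupOf_iff {K L : Subgroup G} [L.Normal]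
    [(L.subgroupOf K).Normal] {a : K} :
    (a : K ⧸ L.subgroupOf K) = 1 ↔ ((a : G) : G ⧸ L) = 1 := by
  rw [QuotientGroup.eq_one_iff, QuotientGroup.eq_one_iff, mem_subgroupOf]

theorem Abelianization.of_eq_one_iff {x : G} : Abelianization.of x = 1 ↔ x ∈ commutator G := by
  rw [← MonoidHom.mem_ker, Abelianization.ker_of]

theorem commutator_top_le_comap {K : Subgroup G} {L : Subgroup H} {f : G →* H}
    (h : K ≤ L.comap f) : ⁅K, ⊤⁆ ≤ ⁅L, (⊤ : Subgroup H)⁆.comap f := by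
  rw [← map_le_iff_le_comap, map_commutator]
  exact commutator_mono (map_le_iff_le_comap.mpr h) le_top

theorem commutatorElement_mul_mul_of_mem_center {a b z z' : G} (hz : z ∈ center G)
    (hz' : z' ∈ center G) : ⁅a * z, b * z'⁆ = ⁅a, b⁆ := by
  rw [mem_center_iff] at hz hz'
  calc ⁅a * z, b * z'⁆ = a * (z * (b * z')) * (z⁻¹ * a⁻¹) * (z'⁻¹ * b⁻¹) := by
        rw [commutatorElement_def]; group
    _ = a * b * (z' * a⁻¹) * z'⁻¹ * b⁻¹ := by rw [← hz]; group
    _ = ⁅a, b⁆ := by rw [← hz', commutatorElement_def]; group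

theorem commutator_le_eqLocus_of_inv_mul_mem_center {α β : F →* H}
    (h : ∀ w, (β w)⁻¹ * α w ∈ center H) : commutator F ≤ α.eqLocus β := by
  rw [commutator_def, commutator_le]
  intro u _ v _
  have hα : ∀ w, α w = β w * ((β w)⁻¹ * α w) := fun w => (mul_inv_cancel_left _ _).symm
  show α ⁅u, v⁆ = β ⁅u, v⁆
  rw [map_commutatorElement, map_commutatorElement, hα u, hα v,
    commutatorElement_mul_mul_of_mem_center (h u) (h v)]

theorem map_mk'_le_center (N : Subgroup G) [N.Normal] :
    N.map (mk' ⁅N, ⊤⁆) ≤ center (G ⧸ ⁅N, ⊤⁆) := by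
  rw [← commutator_top_right_eq_bot_iff_le_center, ← map_top_of_surjective _ (mk'_surjective _),
    ← map_commutator, map_mk'_self]

theorem mk_eq_mk_of_mem_commutator {N : Subgroup G} [N.Normal] {α β : F →* G}
    (h : (mk' N).comp α = (mk' N).comp β) {w : F} (hw : w ∈ commutator F) :
    (α w : G ⧸ ⁅N, (⊤ : Subgroup G)⁆) = β w := by
  refine commutator_le_eqLocus_of_inv_mul_mem_center (α := (mk' _).comp α)
    (β := (mk' _).comp β) (fun u => map_mk'_le_center N ⟨(β u)⁻¹ * α u, ?_, rfl⟩) hw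
  exact QuotientGroup.eq.mp (DFunLike.congr_fun h u).symm

end Commutators

section FiveTermExactSequence

open QuotientGroup Subgroup

variable {G : Type*} [Group G]

theorem freePres_surjective : Function.Surjective (freePres G) :=
  FreeGroup.lift_surjective_of_surjective Function.surjective_id

variable (N : Subgroup G) [N.Normal]

def outLift : FreeGroup (G ⧸ N) →* G := FreeGroup.lift Quotient.out

theorem mk'_comp_outLift : (mk' N).comp (outLift N) = freePres (G ⧸ N) := by
  ext q
  simp [outLift, freePres]

theorem ker_freePres_le_comap_outLift : (freePres (G ⧸ N)).ker ≤ N.comap (outLift N) := by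
  intro w hw
  rw [mem_comap, ← QuotientGroup.eq_one_iff, ← mk'_apply, ← MonoidHom.comp_apply,
    mk'_comp_outLift]
  exact hw

def schurH2ToCoinv : SchurH2 (G ⧸ N) →* Coinv G N :=
  QuotientGroup.map _ _
    (((outLift N).domRestrict _).codRestrict N
      fun w => ker_freePres_le_comap_outLift N (mem_inf.mp w.2).1)
    fun _ hw => commutator_top_le_comap (ker_freePres_le_comap_outLift N) hw

theorem outLift_map_mk'_eq_freePres {w : FreeGroup G} (hw : w ∈ commutator (FreeGroup G)) :
    (outLift N (FreeGroup.map (mk' N) w) : G ⧸ ⁅N, (⊤ : Subgroup G)⁆) = freePres G w :=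
  mk_eq_mk_of_mem_commutator (α := (outLift N).comp (FreeGroup.map (mk' N)))
    (FreeGroup.ext_hom _ _ fun x => by simp [outLift, freePres]) hw

theorem comap_freePres_le_comap_ker : N.comap (freePres G) ≤
    (freePres (G ⧸ N)).ker.comap (FreeGroup.map (mk' N)) := by
  intro v hv
  rw [mem_comap, MonoidHom.mem_ker, ← MonoidHom.comp_apply, freePres_naturality]
  exact (QuotientGroup.eq_one_iff _).mpr hv

theorem mulExact_schurH2map_schurH2ToCoinv :
    Function.MulExact (SchurH2map (mk' N)) (schurH2ToCoinv N) := by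
  refine MonoidHom.mulExact_of_comp_of_mem_range ?_ ?_
  · ext ⟨v, hv⟩
    refine mk_eq_one_subgroupOf_iff.mpr ?_
    show (outLift N (FreeGroup.map (mk' N) v) : G ⧸ ⁅N, (⊤ : Subgroup G)⁆) = 1
    rw [outLift_map_mk'_eq_freePres N (mem_inf.mp hv).2, (mem_inf.mp hv).1, QuotientGroup.mk_one]
  · intro y hy
    obtain ⟨⟨w, hw⟩, rfl⟩ := mk_surjective y
    have hw_comm : w ∈ (commutator (FreeGroup G)).map (FreeGroup.map (mk' N)) := by
      rw [map_commutator_of_surjective (FreeGroup.map_surjective (mk'_surjective N))]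
      exact (mem_inf.mp hw).2
    obtain ⟨v, hv, rfl⟩ := hw_comm
    have hv_lift : freePres G v ∈
        (⁅N.comap (freePres G), ⊤⁆ : Subgroup (FreeGroup G)).map (freePres G) := by
      rw [map_commutator, map_comap_eq_self_of_surjective freePres_surjective,
        map_top_of_surjective _ freePres_surjective, ← QuotientGroup.eq_one_iff,
        ← outLift_map_mk'_eq_freePres N hv]
      exact mk_eq_one_subgroupOf_iff.mp hy
    obtain ⟨u, hu, huv⟩ := hv_lift
    have hu_comm : u ∈ commutator (FreeGroup G) := commutator_mono le_top le_rfl hu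
    -- `v * u⁻¹` is a relator of `G` lifting `w` modulo `⁅(freePres (G ⧸ N)).ker, ⊤⁆`
    refine ⟨(QuotientGroup.mk ⟨v * u⁻¹, mem_inf.mpr ⟨?_, mul_mem hv (inv_mem hu_comm)⟩⟩ :
        SchurH2 G), mk_eq_mk_subgroupOf_iff.mpr ?_⟩
    · rw [MonoidHom.mem_ker, map_mul, map_inv, huv, mul_inv_cancel]
    · refine QuotientGroup.eq.mpr ?_
      show (FreeGroup.map (mk' N) (v * u⁻¹))⁻¹ * FreeGroup.map (mk' N) v ∈ _
      rw [map_mul, map_inv, mul_inv_rev, inv_inv, inv_mul_cancel_right]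
      exact commutator_top_le_comap (comap_freePres_le_comap_ker N) hu

theorem mulExact_schurH2ToCoinv_coinvToAb :
    Function.MulExact (schurH2ToCoinv N) (coinvToAb G N) := by
  refine MonoidHom.mulExact_of_comp_of_mem_range ?_ ?_
  · ext ⟨w, hw⟩
    show Abelianization.of (outLift N w) = 1
    exact Abelianization.of_eq_one_iff.mpr (commutator_le_comap_commutator _ (mem_inf.mp hw).2)
  · intro y hy
    obtain ⟨⟨n, hn⟩, rfl⟩ := mk_surjective y
    have hn_comm : n ∈ (commutator (FreeGroup G)).map (freePres G) := by
      rw [map_commutator_of_surjective freePres_surjective]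
      exact Abelianization.of_eq_one_iff.mp hy
    obtain ⟨v, hv, rfl⟩ := hn_comm
    refine ⟨mk ⟨FreeGroup.map (mk' N) v, comap_freePres_le_comap_ker N hn,
        commutator_le_comap_commutator _ hv⟩,
      mk_eq_mk_subgroupOf_iff.mpr (outLift_map_mk'_eq_freePres N hv)⟩

theorem mulExact_coinvToAb_abelianizationMap :
    Function.MulExact (coinvToAb G N) (Abelianization.map (mk' N)) := by
  refine MonoidHom.mulExact_of_comp_of_mem_range ?_ ?_
  · ext n
    show Abelianization.of (mk' N n) = 1
    rw [mk'_apply, (QuotientGroup.eq_one_iff _).mpr n.2, map_one]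
  · intro x hx
    obtain ⟨g, rfl⟩ := mk_surjective x
    have hg : (g : G ⧸ N) ∈ (commutator G).map (mk' N) := by
      rw [map_commutator_of_surjective (mk'_surjective N)]
      exact Abelianization.of_eq_one_iff.mp hx
    obtain ⟨h, hh, hhg⟩ := hg
    refine ⟨mk ⟨h⁻¹ * g, QuotientGroup.eq.mp hhg⟩, ?_⟩
    show Abelianization.of (h⁻¹ * g) = Abelianization.of g
    rw [map_mul, map_inv, Abelianization.of_eq_one_iff.mpr hh, inv_one, one_mul]

end FiveTermExactSequence

section Naturality

open QuotientGroup Subgroup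

variable {G₁ G₂ G₃ : Type*} [Group G₁] [Group G₂] [Group G₃]

theorem SchurH2map_comp (f : G₁ →* G₂) (g : G₂ →* G₃) :
    (SchurH2map g).comp (SchurH2map f) = SchurH2map (g.comp f) := by
  ext ⟨v, hv⟩
  exact congrArg QuotientGroup.mk (Subtype.ext (FreeGroup.map.comp _ _ v))

theorem SchurH2map_id : SchurH2map (MonoidHom.id G₁) = MonoidHom.id _ := by
  ext ⟨v, hv⟩
  exact congrArg QuotientGroup.mk (Subtype.ext (FreeGroup.map.id v))

theorem SchurH2map_bijective {f : G₁ →* G₂} (hf : Function.Bijective f) :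
    Function.Bijective (SchurH2map f) := by
  set e := MulEquiv.ofBijective f hf
  have hl : (SchurH2map (e.symm : G₂ →* G₁)).comp (SchurH2map f) = MonoidHom.id _ := by
    rw [SchurH2map_comp, ← SchurH2map_id]
    congr
    ext x
    exact e.symm_apply_apply x
  have hr : (SchurH2map f).comp (SchurH2map (e.symm : G₂ →* G₁)) = MonoidHom.id _ := by
    rw [SchurH2map_comp, ← SchurH2map_id]
    congr
    ext x
    exact e.apply_symm_apply x
  exact Function.bijective_iff_has_inverse.mpr ⟨_, DFunLike.congr_fun hl, DFunLike.congr_fun hr⟩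

theorem Abelianization.map_bijective {f : G₁ →* G₂} (hf : Function.Bijective f) :
    Function.Bijective (Abelianization.map f) :=
  (MulEquiv.abelianizationCongr (MulEquiv.ofBijective f hf)).bijective

variable (f : G₁ →* G₂) {N₁ : Subgroup G₁} {N₂ : Subgroup G₂} [N₁.Normal] [N₂.Normal]
  (hf : N₁ ≤ N₂.comap f)

theorem schurH2ToCoinv_natural :
    (schurH2ToCoinv N₂).comp (SchurH2map (map N₁ N₂ f hf)) =
      (coinvMap f N₁ N₂ fun _ hn => hf hn).comp (schurH2ToCoinv N₁) := by
  ext ⟨w, hw⟩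
  refine mk_eq_mk_subgroupOf_iff.mpr ?_
  show (outLift N₂ (FreeGroup.map (map N₁ N₂ f hf) w) : G₂ ⧸ ⁅N₂, (⊤ : Subgroup G₂)⁆) =
    f (outLift N₁ w)
  refine mk_eq_mk_of_mem_commutator (α := (outLift N₂).comp (FreeGroup.map (map N₁ N₂ f hf)))
    (β := f.comp (outLift N₁)) (FreeGroup.ext_hom _ _ fun q => ?_) (mem_inf.mp hw).2
  simp only [MonoidHom.comp_apply, FreeGroup.map.of, outLift, FreeGroup.lift_apply_of, mk'_apply]
  rw [← map_mk N₁ N₂ f hf, QuotientGroup.out_eq', QuotientGroup.out_eq']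

theorem coinvToAb_natural :
    (coinvToAb G₂ N₂).comp (coinvMap f N₁ N₂ fun _ hn => hf hn) =
      (Abelianization.map f).comp (coinvToAb G₁ N₁) := by
  ext
  rfl

theorem coinvMap_bijective (h1 : Function.Bijective (Abelianization.map f))
    (h2 : Function.Surjective (SchurH2map f)) (hq : Function.Bijective (map N₁ N₂ f hf)) :
    Function.Bijective (coinvMap f N₁ N₂ fun _ hn => hf hn) :=
  MonoidHom.bijective_of_surjective_of_bijective_of_bijective_of_injective
    _ _ _ _ _ _ _ _ _ _ _ _ (Abelianization.map (map N₁ N₂ f hf))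
    (by rw [SchurH2map_comp, SchurH2map_comp]; rfl)
    (schurH2ToCoinv_natural f hf) (coinvToAb_natural f hf)
    (by rw [Abelianization.map_comp, Abelianization.map_comp]; rfl)
    (mulExact_schurH2map_schurH2ToCoinv N₁) (mulExact_schurH2ToCoinv_coinvToAb N₁)
    (mulExact_coinvToAb_abelianizationMap N₁) (mulExact_schurH2map_schurH2ToCoinv N₂)
    (mulExact_schurH2ToCoinv_coinvToAb N₂) (mulExact_coinvToAb_abelianizationMap N₂)
    h2 (SchurH2map_bijective hq) h1 (Abelianization.map_bijective hq).1

end Naturality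

section LowerCentralSeries

open QuotientGroup Subgroup

variable {G₁ G₂ : Type*} [Group G₁] [Group G₂] (f : G₁ →* G₂) {N₁ : Subgroup G₁}
  {N₂ : Subgroup G₂} [N₁.Normal] [N₂.Normal] (hf : N₁ ≤ N₂.comap f)

theorem map_commutator_top_bijective (hq : Function.Bijective (map N₁ N₂ f hf))
    (hc : Function.Bijective (coinvMap f N₁ N₂ fun _ hn => hf hn)) :
    Function.Bijective (map ⁅N₁, ⊤⁆ ⁅N₂, ⊤⁆ f (commutator_top_le_comap hf)) := by
  constructor
  · rw [injective_iff_map_eq_one]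
    intro x hx
    obtain ⟨g, rfl⟩ := mk_surjective x
    have hg₂ : f g ∈ ⁅N₂, ⊤⁆ := (eq_one_iff _).mp hx
    have hg₁ : g ∈ N₁ := (eq_one_iff _).mp <| hq.1 <| by
      rw [map_mk, map_one, eq_one_iff]
      exact commutator_le_left _ _ hg₂
    have hg : (QuotientGroup.mk ⟨g, hg₁⟩ : Coinv G₁ N₁) = 1 := hc.1 <| by
      rw [map_one]
      exact mk_eq_one_subgroupOf_iff.mpr ((eq_one_iff _).mpr hg₂)
    exact mk_eq_one_subgroupOf_iff.mp hg
  · intro y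
    obtain ⟨g₂, rfl⟩ := mk_surjective y
    obtain ⟨x, hx⟩ := hq.2 g₂
    obtain ⟨g₁, rfl⟩ := mk_surjective x
    obtain ⟨c, hc'⟩ := hc.2 (QuotientGroup.mk ⟨(f g₁)⁻¹ * g₂, QuotientGroup.eq.mp hx⟩)
    obtain ⟨⟨n, hn⟩, rfl⟩ := mk_surjective c
    have hfn : (f n : G₂ ⧸ ⁅N₂, (⊤ : Subgroup G₂)⁆) = ↑((f g₁)⁻¹ * g₂) :=
      mk_eq_mk_subgroupOf_iff.mp hc'
    refine ⟨g₁ * n, ?_⟩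
    rw [map_mul, map_mk, map_mk, hfn, ← QuotientGroup.mk_mul, mul_inv_cancel_left]

theorem bijective_of_map_bijective_of_eq_bot (hq : Function.Bijective (map N₁ N₂ f hf))
    (h₁ : N₁ = ⊥) (h₂ : N₂ = ⊥) : Function.Bijective f := by
  subst h₁ h₂
  have hcomp : ⇑f = quotientBot ∘ map ⊥ ⊥ f hf ∘ quotientBot.symm := by
    funext g
    rfl
  rw [hcomp]
  exact quotientBot.bijective.comp (hq.comp quotientBot.symm.bijective)

theorem lcsQuotMap_bijective (h1 : Function.Bijective (Abelianization.map f))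
    (h2 : Function.Surjective (SchurH2map f)) : ∀ i, Function.Bijective (lcsQuotMap f i)
  | 0 =>
    have : Subsingleton (G₁ ⧸ (⊤ : Subgroup G₁).lowerCentralSeries 0) :=
      subsingleton_quotient_top
    have : Subsingleton (G₂ ⧸ (⊤ : Subgroup G₂).lowerCentralSeries 0) :=
      subsingleton_quotient_top
    ⟨fun a b _ => Subsingleton.elim a b, fun _ => ⟨1, Subsingleton.elim _ _⟩⟩
  | i + 1 =>
    have ih := lcsQuotMap_bijective h1 h2 i
    map_commutator_top_bijective f _ ih (coinvMap_bijective f _ h1 h2 ih)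

end LowerCentralSeries

/-- Stallings' theorem: if `f : G₁ →* G₂` induces an isomorphism on `H₁(-;ℤ)` (the
abelianization) and an epimorphism on `H₂(-;ℤ)` (Hopf's formula), then `f` induces
isomorphisms `G₁/Γ^{i+1}G₁ ≅ G₂/Γ^{i+1}G₂` for all `i ≥ 1`; in particular, if `G₁` and
`G₂` are nilpotent then `f` is an isomorphism.  (Here `lcsQuotMap f i` is the map induced
on `G/Γ^{i+1}G = G ⧸ lowerCentralSeries G i`.) -/
theorem stmt17 {G₁ G₂ : Type*} [Group G₁] [Group G₂] (f : G₁ →* G₂)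
    (h1 : Function.Bijective (Abelianization.map f))
    (h2 : Function.Surjective (SchurH2map f)) :
    (∀ i : ℕ, 1 ≤ i → Function.Bijective (lcsQuotMap f i)) ∧
    (Group.IsNilpotent G₁ → Group.IsNilpotent G₂ → Function.Bijective f) := by
  refine ⟨fun i _ => lcsQuotMap_bijective f h1 h2 i, fun _ _ => ?_⟩
  set n := max (Group.nilpotencyClass G₁) (Group.nilpotencyClass G₂)
  exact bijective_of_map_bijective_of_eq_bot f _ (lcsQuotMap_bijective f h1 h2 n)
    (Subgroup.lowerCentralSeries_eq_bot_iff_nilpotencyClass_le.mpr (le_max_left _ _))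
    (Subgroup.lowerCentralSeries_eq_bot_iff_nilpotencyClass_le.mpr (le_max_right _ _))

end
end
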